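/- Let D ≥ 2 be an integer and let p be a single-edge strategy in vector form. Then σ_p is an extreme point of S = {σ_q : q a single-edge strategy in vector form} if and only if every consistent single-edge strategy q in vector form with σ_q = σ_p is deterministic, i.e. satisfies q_k(u) ∈ {0,1} for every k, for Λ^D-almost every u. -/

import Mathlib

open MeasureTheory Filter unitInterval
open scoped ENNReal Topology Classical

noncomputable def LamD (D : ℕ) : Measure (Fin D → unitInterval) :=
  Measure.pi fun _ => (volume : Measure unitInterval)

def IsStrategyVec {D : ℕ} (p : (Fin D → unitInterval) → Fin D → ℝ) : Prop :=
  Measurable p ∧ (∀ u k, 0 ≤ p u k) ∧ (∀ u k, p u k ≤ 1) ∧ (∀ u, ∑ k, p u k = 1)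

noncomputable def sigmaVec {D : ℕ} (p : (Fin D → unitInterval) → Fin D → ℝ) :
    Measure unitInterval :=
  ∑ k : Fin D, Measure.map (fun u => u k)
    ((LamD D).withDensity fun u => ENNReal.ofReal (p u k))

noncomputable def densityFn {D : ℕ} (p : (Fin D → unitInterval) → Fin D → ℝ)
    (y : unitInterval) : ℝ :=
  ∑ k : Fin D, ∫ u, p (Function.update u k y) k ∂(LamD D)

def IsConsistent {D : ℕ} [NeZero D] (q : (Fin D → unitInterval) → Fin D → ℝ) : Prop :=
  (∀ u k, q u k = q (fun i => u (k + i)) 0) ∧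
  (∀ u (ι : Equiv.Perm (Fin D)), ι 0 = 0 → q u 0 = q (fun i => u (ι i)) 0)

def strategyLaws (D : ℕ) : Set (Measure unitInterval) :=
  {m | ∃ p : (Fin D → unitInterval) → Fin D → ℝ, IsStrategyVec p ∧ m = sigmaVec p}

def IsExtremeLaw (D : ℕ) (m : Measure unitInterval) : Prop :=
  m ∈ strategyLaws D ∧ ∀ m₁ ∈ strategyLaws D, ∀ m₂ ∈ strategyLaws D, ∀ t : ℝ,
    0 < t → t < 1 → m = ENNReal.ofReal t • m₁ + ENNReal.ofReal (1 - t) • m₂ → m₁ = m₂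

def IsMPB (φ : unitInterval → unitInterval) : Prop :=
  Function.Bijective φ ∧ Measurable φ ∧ Measurable (Function.invFun φ) ∧
  ∀ B : Set unitInterval, MeasurableSet B → volume (φ '' B) = volume B

noncomputable def maxCoord (D : ℕ) (hD : 1 ≤ D) (u : Fin D → unitInterval) : unitInterval :=
  Finset.univ.sup' ⟨⟨0, hD⟩, Finset.mem_univ _⟩ u

noncomputable def sigmaMax (D : ℕ) (hD : 1 ≤ D) : Measure unitInterval :=
  Measure.map (maxCoord D hD) (LamD D)

noncomputable def emp {D : ℕ} {Ω : Type*} (V : ℕ × Fin D → Ω → unitInterval)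
    (ω : Ω) (n : ℕ) (π : Fin n → Fin D) : Measure unitInterval :=
  (n : ℝ≥0∞)⁻¹ • ∑ i : Fin n, Measure.dirac (V ((i : ℕ), π i) ω)

section helpers

variable {D : ℕ}

instance LamD_prob (D : ℕ) : IsProbabilityMeasure (LamD D) := by
  unfold LamD; infer_instance

lemma meas_app {q : (Fin D → unitInterval) → Fin D → ℝ} (hq : Measurable q) (k : Fin D) :
    Measurable fun u => q u k := (measurable_pi_apply k).comp hq

lemma meas_comp_perm (π : Equiv.Perm (Fin D)) :
    Measurable fun u : Fin D → unitInterval => u ∘ π :=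
  measurable_pi_lambda _ fun i => measurable_pi_apply _

lemma mp_perm (π : Equiv.Perm (Fin D)) :
    MeasurePreserving (fun u : Fin D → unitInterval => u ∘ π) (LamD D) (LamD D) := by
  have h := measurePreserving_piCongrLeft (fun _ : Fin D => (volume : Measure unitInterval)) π.symm
  convert h using 1
  ext u
  simp [MeasurableEquiv.piCongrLeft, Equiv.piCongrLeft, Equiv.piCongrLeft']
  all_goals rfl

lemma sigmaVec_apply (q : (Fin D → unitInterval) → Fin D → ℝ) (hq : Measurable q)
    {A : Set unitInterval} (hA : MeasurableSet A) :
    sigmaVec q A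
      = ∑ k : Fin D, ∫⁻ u, A.indicator (fun _ => (1 : ℝ≥0∞)) (u k) * ENNReal.ofReal (q u k)
          ∂(LamD D) := by
  unfold sigmaVec
  rw [Measure.finset_sum_apply]
  refine Finset.sum_congr rfl fun k _ => ?_
  rw [Measure.map_apply (measurable_pi_apply k) hA,
    withDensity_apply _ (hA.preimage (measurable_pi_apply k)),
    ← lintegral_indicator (hA.preimage (measurable_pi_apply k))]
  refine lintegral_congr fun u => ?_
  by_cases h : u k ∈ A <;>
    simp [Set.indicator_apply, h]

lemma sigmaVec_ne_top (q : (Fin D → unitInterval) → Fin D → ℝ) (hq : Measurable q)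
    (hq1 : ∀ u k, q u k ≤ 1) (A : Set unitInterval) : sigmaVec q A ≠ ∞ := by
  have h1 : sigmaVec q A ≤ sigmaVec q Set.univ := measure_mono (Set.subset_univ A)
  have h2 : sigmaVec q Set.univ ≤ D := by
    rw [sigmaVec_apply q hq MeasurableSet.univ]
    calc ∑ k : Fin D, ∫⁻ u, Set.univ.indicator (fun _ => (1:ℝ≥0∞)) (u k)
            * ENNReal.ofReal (q u k) ∂(LamD D)
        ≤ ∑ k : Fin D, ∫⁻ _u, (1:ℝ≥0∞) ∂(LamD D) := by
          refine Finset.sum_le_sum fun k _ => lintegral_mono fun u => ?_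
          simp only [Set.indicator_univ, one_mul]
          exact ENNReal.ofReal_le_one.2 (hq1 u k)
      _ = D := by simp [lintegral_const]
  exact ne_top_of_le_ne_top (by simp : (D:ℝ≥0∞) ≠ ∞) (le_trans h1 h2)

/-- withDensity of a finite sum. -/
lemma withDensity_finset_sum {α : Type*} [MeasurableSpace α] (μ : Measure α)
    {ι : Type*} (s : Finset ι) (f : ι → α → ℝ≥0∞) (hf : ∀ i, Measurable (f i)) :
    μ.withDensity (fun x => ∑ i ∈ s, f i x) = ∑ i ∈ s, μ.withDensity (f i) := by
  classical
  induction s using Finset.induction_on with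
  | empty => simp
  | @insert a s hnot ih =>
    simp only [Finset.sum_insert hnot]
    have hrw : (fun x => f a x + ∑ i ∈ s, f i x) = f a + fun x => ∑ i ∈ s, f i x := rfl
    rw [hrw, withDensity_add_right _ (by exact Finset.measurable_sum s fun i _ => hf i), ih]

/-- map of a finite sum of measures. -/
lemma measure_map_finset_sum {α β : Type*} [MeasurableSpace α] [MeasurableSpace β]
    {ι : Type*} (s : Finset ι) (μ : ι → Measure α) {f : α → β} (hf : Measurable f) :
    Measure.map f (∑ i ∈ s, μ i) = ∑ i ∈ s, Measure.map f (μ i) := by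
  classical
  induction s using Finset.induction_on with
  | empty => simp
  | @insert a s hnot ih =>
    simp only [Finset.sum_insert hnot]
    rw [Measure.map_add _ _ hf, ih]

/-- Linearity of `sigmaVec` for nonnegative weighted sums. -/
lemma sigmaVec_weighted {ι : Type*} [Fintype ι] (w : ι → ℝ) (hw : ∀ i, 0 ≤ w i)
    (a : ι → (Fin D → unitInterval) → Fin D → ℝ)
    (ha : ∀ i, Measurable (a i)) (h0 : ∀ i u k, 0 ≤ a i u k) :
    sigmaVec (fun u k => ∑ i : ι, w i * a i u k)
      = ∑ i : ι, ENNReal.ofReal (w i) • sigmaVec (a i) := by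
  unfold sigmaVec
  have key : ∀ k : Fin D,
      (fun u : Fin D → unitInterval => ENNReal.ofReal (∑ i : ι, w i * a i u k))
        = fun u => ∑ i : ι, ENNReal.ofReal (w i) * ENNReal.ofReal (a i u k) := by
    intro k; funext u
    rw [ENNReal.ofReal_sum_of_nonneg fun i _ => mul_nonneg (hw i) (h0 i u k)]
    exact Finset.sum_congr rfl fun i _ => ENNReal.ofReal_mul (hw i)
  have hmeas : ∀ (i : ι) (k : Fin D),
      Measurable fun u : Fin D → unitInterval =>
        ENNReal.ofReal (w i) * ENNReal.ofReal (a i u k) :=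
    fun i k => ((meas_app (ha i) k).ennreal_ofReal).const_mul _
  calc
    ∑ k : Fin D, Measure.map (fun u => u k)
        ((LamD D).withDensity fun u => ENNReal.ofReal (∑ i : ι, w i * a i u k))
      = ∑ k : Fin D, ∑ i : ι, Measure.map (fun u => u k)
          ((LamD D).withDensity fun u => ENNReal.ofReal (w i) * ENNReal.ofReal (a i u k)) := by
        refine Finset.sum_congr rfl fun k _ => ?_
        rw [key k, withDensity_finset_sum _ _ _ (fun i => hmeas i k),
          measure_map_finset_sum _ _ (measurable_pi_apply k)]
    _ = ∑ i : ι, ENNReal.ofReal (w i) • ∑ k : Fin D, Measure.map (fun u => u k)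
          ((LamD D).withDensity fun u => ENNReal.ofReal (a i u k)) := by
        rw [Finset.sum_comm]
        refine Finset.sum_congr rfl fun i _ => ?_
        rw [Finset.smul_sum]
        refine Finset.sum_congr rfl fun k _ => ?_
        have : (fun u : Fin D → unitInterval => ENNReal.ofReal (w i) * ENNReal.ofReal (a i u k))
            = ENNReal.ofReal (w i) • fun u => ENNReal.ofReal (a i u k) := by
          funext u; simp [smul_eq_mul]
        rw [this, withDensity_smul _ ((meas_app (ha i) k).ennreal_ofReal),
          Measure.map_smul]

/-- Convexity of `sigmaVec`. -/
lemma sigmaVec_convex (a b : (Fin D → unitInterval) → Fin D → ℝ)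
    (ha : Measurable a) (hb : Measurable b)
    (h0a : ∀ u k, 0 ≤ a u k) (h0b : ∀ u k, 0 ≤ b u k)
    (t : ℝ) (ht0 : 0 ≤ t) (ht1 : t ≤ 1) :
    sigmaVec (fun u k => t * a u k + (1 - t) * b u k)
      = ENNReal.ofReal t • sigmaVec a + ENNReal.ofReal (1 - t) • sigmaVec b := by
  classical
  have ht1' : (0:ℝ) ≤ 1 - t := by linarith
  have key := sigmaVec_weighted (ι := Bool)
    (fun i => if i then t else 1 - t)
    (fun i => by cases i <;> simp [ht0, ht1'])
    (fun i => if i then a else b)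
    (fun i => by cases i <;> simpa)
    (fun i u k => by cases i <;> simp [h0a, h0b])
  have h1 : (fun (u : Fin D → unitInterval) (k : Fin D) =>
      ∑ i : Bool, (if i then t else 1 - t) * (if i then a else b) u k)
        = fun u k => t * a u k + (1 - t) * b u k := by
    funext u k
    simp [Fintype.sum_bool]
  rw [h1] at key
  rw [key, Fintype.sum_bool]
  simp

/-- `sigmaVec` is invariant under the permutation action on strategies. -/
lemma sigmaVec_perm (r : (Fin D → unitInterval) → Fin D → ℝ) (hr : Measurable r)
    (π : Equiv.Perm (Fin D)) :
    sigmaVec (fun u k => r (u ∘ π) (π⁻¹ k)) = sigmaVec r := by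
  have hmeas : Measurable fun u : Fin D → unitInterval => r (u ∘ π) := hr.comp (meas_comp_perm π)
  refine Measure.ext fun A hA => ?_
  have hmeas2 : Measurable fun u : Fin D → unitInterval => fun k => r (u ∘ π) (π⁻¹ k) :=
    measurable_pi_lambda _ fun k => (measurable_pi_apply (π⁻¹ k)).comp hmeas
  rw [sigmaVec_apply _ hr hA, sigmaVec_apply _ hmeas2 hA]
  have step : ∀ k : Fin D,
      (∫⁻ u, A.indicator (fun _ => (1:ℝ≥0∞)) (u k) * ENNReal.ofReal (r (u ∘ π) (π⁻¹ k)) ∂(LamD D))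
        = ∫⁻ v, A.indicator (fun _ => (1:ℝ≥0∞)) (v (π⁻¹ k)) * ENNReal.ofReal (r v (π⁻¹ k))
            ∂(LamD D) := by
    intro k
    have hF : Measurable fun v : Fin D → unitInterval =>
        A.indicator (fun _ => (1:ℝ≥0∞)) (v (π⁻¹ k)) * ENNReal.ofReal (r v (π⁻¹ k)) := by
      refine Measurable.mul ?_ ((meas_app hr (π⁻¹ k)).ennreal_ofReal)
      exact ((measurable_const.indicator hA).comp (measurable_pi_apply (π⁻¹ k)))
    have := (mp_perm π).lintegral_comp hF
    rw [← this]
    refine lintegral_congr fun u => ?_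
    have : (u ∘ π) (π⁻¹ k) = u k := by simp
    rw [this]
  calc
    ∑ k : Fin D, ∫⁻ u, A.indicator (fun _ => (1:ℝ≥0∞)) (u k)
        * ENNReal.ofReal (r (u ∘ π) (π⁻¹ k)) ∂(LamD D)
      = ∑ k : Fin D, ∫⁻ v, A.indicator (fun _ => (1:ℝ≥0∞)) (v (π⁻¹ k))
          * ENNReal.ofReal (r v (π⁻¹ k)) ∂(LamD D) := Finset.sum_congr rfl fun k _ => step k
    _ = ∑ k : Fin D, ∫⁻ v, A.indicator (fun _ => (1:ℝ≥0∞)) (v k)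
          * ENNReal.ofReal (r v k) ∂(LamD D) := by
        exact Equiv.sum_comp (π⁻¹ : Equiv.Perm (Fin D))
          (fun k => ∫⁻ v, A.indicator (fun _ => (1:ℝ≥0∞)) (v k) * ENNReal.ofReal (r v k) ∂(LamD D))

/-- a.e. equal strategies give the same law. -/
lemma sigmaVec_congr_ae {p₁ p₂ : (Fin D → unitInterval) → Fin D → ℝ}
    (h : ∀ᵐ u ∂(LamD D), ∀ k, p₁ u k = p₂ u k) : sigmaVec p₁ = sigmaVec p₂ := by
  unfold sigmaVec
  refine Finset.sum_congr rfl fun k _ => ?_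
  have : (fun u => ENNReal.ofReal (p₁ u k)) =ᵐ[LamD D] fun u => ENNReal.ofReal (p₂ u k) := by
    filter_upwards [h] with u hu
    rw [hu k]
  rw [withDensity_congr_ae this]

end helpers


section diag
variable {D : ℕ}

lemma LamD_box {j k : Fin D} (hjk : j ≠ k) {A B : Set unitInterval}
    (hA : MeasurableSet A) (hB : MeasurableSet B) :
    LamD D {u | u j ∈ A ∧ u k ∈ B} = volume A * volume B := by
  classical
  set s : Fin D → Set unitInterval :=
    Function.update (Function.update (fun _ => Set.univ) j A) k B with hs
  have hset : {u : Fin D → unitInterval | u j ∈ A ∧ u k ∈ B} = Set.pi Set.univ s := by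
    ext u
    simp only [Set.mem_setOf_eq, Set.mem_pi, Set.mem_univ, true_implies, hs]
    constructor
    · rintro ⟨h1, h2⟩ i
      rcases eq_or_ne i k with rfl | hik
      · simpa [Function.update_self] using h2
      · rcases eq_or_ne i j with rfl | hij
        · simpa [Function.update_of_ne hik, Function.update_self] using h1
        · simp [Function.update_of_ne hik, Function.update_of_ne hij]
    · intro h
      refine ⟨?_, ?_⟩
      · have := h j
        simpa [Function.update_of_ne hjk, Function.update_self] using this
      · have := h k
        simpa [Function.update_self] using this
  rw [hset]
  unfold LamD
  rw [Measure.pi_pi]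
  have : ∀ i : Fin D, volume (s i) = if i = k then volume B else if i = j then volume A else 1 := by
    intro i
    rcases eq_or_ne i k with rfl | hik
    · simp [hs, Function.update_self]
    · rcases eq_or_ne i j with rfl | hij
      · simp [hs, Function.update_of_ne hik, Function.update_self, hjk]
      · simp [hs, Function.update_of_ne hik, Function.update_of_ne hij, measure_univ, hik, hij]
  rw [Finset.prod_congr rfl fun i _ => this i]
  set f : Fin D → ℝ≥0∞ := fun i => if i = k then volume B else if i = j then volume A else 1 with hf
  have h1 : ∏ i : Fin D, f i = f k * ∏ i ∈ Finset.univ.erase k, f i :=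
    (Finset.mul_prod_erase Finset.univ f (Finset.mem_univ k)).symm
  have h2 : ∏ i ∈ Finset.univ.erase k, f i
      = f j * ∏ i ∈ (Finset.univ.erase k).erase j, f i :=
    (Finset.mul_prod_erase _ f (Finset.mem_erase.2 ⟨hjk, Finset.mem_univ j⟩)).symm
  have h3 : ∏ i ∈ (Finset.univ.erase k).erase j, f i = 1 := by
    refine Finset.prod_eq_one fun i hi => ?_
    rcases Finset.mem_erase.1 hi with ⟨hij, hi2⟩
    rcases Finset.mem_erase.1 hi2 with ⟨hik, -⟩
    simp [hf, hik, hij]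
  rw [h1, h2, h3]
  simp [hf, hjk, mul_comm]

lemma unit_small_interval (a b : ℝ) :
    volume {x : unitInterval | a ≤ (x:ℝ) ∧ (x:ℝ) ≤ b} ≤ ENNReal.ofReal (b - a) := by
  have hemb : MeasurableEmbedding ((↑) : unitInterval → ℝ) :=
    MeasurableEmbedding.subtype_coe measurableSet_Icc
  have hset : {x : unitInterval | a ≤ (x:ℝ) ∧ (x:ℝ) ≤ b}
      = Subtype.val ⁻¹' Set.Icc a b := by
    ext x; simp [Set.mem_Icc]
  rw [unitInterval.volume_def, hset, hemb.comap_apply]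
  calc volume (Subtype.val '' (Subtype.val ⁻¹' Set.Icc a b))
      ≤ volume (Set.Icc a b) := measure_mono (Set.image_preimage_subset _ _)
    _ = ENNReal.ofReal (b - a) := Real.volume_Icc

lemma LamD_diag_null {j k : Fin D} (hjk : j ≠ k) :
    LamD D {u | u j = u k} = 0 := by
  classical
  -- for each n, cover the diagonal by n+1 small boxes
  have key : ∀ n : ℕ, LamD D {u | u j = u k} ≤ ((n:ℝ≥0∞) + 1)⁻¹ := by
    intro n
    set C : ℕ → Set unitInterval := fun m =>
      {x : unitInterval | (m:ℝ)/(n+1) ≤ (x:ℝ) ∧ (x:ℝ) ≤ ((m:ℝ)+1)/(n+1)} with hC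
    have hCmeas : ∀ m, MeasurableSet (C m) := by
      intro m
      have : C m = Subtype.val ⁻¹' Set.Icc ((m:ℝ)/(n+1)) (((m:ℝ)+1)/(n+1)) := by
        ext x; simp [hC, Set.mem_Icc]
      rw [this]
      exact measurableSet_Icc.preimage measurable_subtype_coe
    have hCvol : ∀ m, volume (C m) ≤ ENNReal.ofReal (1/(n+1)) := by
      intro m
      refine le_trans (unit_small_interval _ _) (le_of_eq ?_)
      congr 1
      field_simp
      ring
    have hcover : {u : Fin D → unitInterval | u j = u k}
        ⊆ ⋃ m ∈ Finset.range (n+1), {u | u j ∈ C m ∧ u k ∈ C m} := by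
      intro u hu
      have hx0 : (0:ℝ) ≤ (u j : ℝ) := (u j).2.1
      have hx1 : (u j : ℝ) ≤ 1 := (u j).2.2
      set x : ℝ := (u j : ℝ) with hxdef
      set m : ℕ := min n (Nat.floor (x * (n+1))) with hm
      have hmn : m ∈ Finset.range (n+1) := by
        simp [hm, Nat.lt_succ_iff]
      have hnpos : (0:ℝ) < (n:ℝ) + 1 := by positivity
      have hmem : u j ∈ C m := by
        constructor
        · -- lower bound
          have h1 : (m:ℝ) ≤ x * (n+1) := by
            have : (m:ℕ) ≤ Nat.floor (x * (n+1)) := min_le_right _ _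
            calc (m:ℝ) ≤ (Nat.floor (x * (n+1)) : ℝ) := by exact_mod_cast this
              _ ≤ x * (n+1) := Nat.floor_le (by positivity)
          rw [div_le_iff₀ hnpos]
          linarith
        · -- upper bound
          by_cases hc : Nat.floor (x * (n+1)) ≤ n
          · have hmeq : m = Nat.floor (x * (n+1)) := min_eq_right hc
            have h2 : x * (n+1) < (Nat.floor (x * (n+1)) : ℝ) + 1 :=
              Nat.lt_floor_add_one _
            rw [le_div_iff₀ hnpos]
            rw [hmeq]
            linarith
          · have hmeq : m = n := min_eq_left (le_of_not_ge hc)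
            rw [hmeq, le_div_iff₀ hnpos]
            nlinarith
      have hmem' : u k ∈ C m := by rw [Set.mem_setOf_eq] at hu; rw [← hu]; exact hmem
      exact Set.mem_biUnion hmn ⟨hmem, hmem'⟩
    calc LamD D {u | u j = u k}
        ≤ LamD D (⋃ m ∈ Finset.range (n+1), {u | u j ∈ C m ∧ u k ∈ C m}) :=
          measure_mono hcover
      _ ≤ ∑ m ∈ Finset.range (n+1), LamD D {u | u j ∈ C m ∧ u k ∈ C m} :=
          measure_biUnion_finset_le _ _
      _ = ∑ m ∈ Finset.range (n+1), volume (C m) * volume (C m) :=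
          Finset.sum_congr rfl fun m _ => LamD_box hjk (hCmeas m) (hCmeas m)
      _ ≤ ∑ _m ∈ Finset.range (n+1), ENNReal.ofReal (1/(n+1)) * ENNReal.ofReal (1/(n+1)) :=
          Finset.sum_le_sum fun m _ => mul_le_mul' (hCvol m) (hCvol m)
      _ = (n+1 : ℝ≥0∞) * (ENNReal.ofReal (1/(n+1)) * ENNReal.ofReal (1/(n+1))) := by
          simp [Finset.sum_const, mul_comm]
      _ ≤ ((n:ℝ≥0∞) + 1)⁻¹ := by
          have hofr : ENNReal.ofReal (1/(n+1)) = ((n:ℝ≥0∞) + 1)⁻¹ := by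
            rw [one_div, ENNReal.ofReal_inv_of_pos (by positivity)]
            congr 1
            rw [show ((n:ℝ) + 1) = ((n+1 : ℕ) : ℝ) by push_cast; ring,
              ENNReal.ofReal_natCast]
            push_cast; ring
          rw [hofr, ← mul_assoc]
          rw [show ((n:ℝ≥0∞)+1) = ((n+1:ℕ):ℝ≥0∞) by push_cast; ring] at *
          rw [ENNReal.mul_inv_cancel (by exact_mod_cast Nat.succ_ne_zero n) (by simp)]
          simp
  refine le_antisymm ?_ zero_le
  refine ENNReal.le_of_forall_pos_le_add fun ε hε _ => ?_
  obtain ⟨n, hn⟩ := ENNReal.exists_inv_nat_lt (a := (ε:ℝ≥0∞)) (by exact_mod_cast hε.ne')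
  calc LamD D {u | u j = u k} ≤ ((n:ℝ≥0∞) + 1)⁻¹ := key n
    _ ≤ ((n:ℝ≥0∞))⁻¹ := ENNReal.inv_le_inv.2 (by simp)
    _ ≤ 0 + ε := by simpa using hn.le

end diag

section symmetrize
variable {D : ℕ} [NeZero D]

/-- The symmetrization of a strategy. -/
noncomputable def symmQ (r : (Fin D → unitInterval) → Fin D → ℝ)
    (u : Fin D → unitInterval) (k : Fin D) : ℝ :=
  ∑ π : Equiv.Perm (Fin D), ((D.factorial : ℝ))⁻¹ * r (u ∘ π) (π⁻¹ k)

lemma symmQ_strategy {r} (hr : IsStrategyVec (D := D) r) : IsStrategyVec (symmQ r) := by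
  obtain ⟨hm, h0, h1, hsum⟩ := hr
  have hwpos : (0:ℝ) < ((D.factorial : ℝ))⁻¹ := by positivity
  have hcard : (Fintype.card (Equiv.Perm (Fin D)) : ℝ) = (D.factorial : ℝ) := by
    rw [Fintype.card_perm]; simp
  refine ⟨?_, ?_, ?_, ?_⟩
  · refine measurable_pi_lambda _ fun k => ?_
    refine Finset.measurable_sum _ fun π _ => ?_
    exact (((measurable_pi_apply (π⁻¹ k)).comp (hm.comp (meas_comp_perm π))).const_mul _)
  · intro u k
    exact Finset.sum_nonneg fun π _ => mul_nonneg hwpos.le (h0 _ _)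
  · intro u k
    calc symmQ r u k ≤ ∑ _π : Equiv.Perm (Fin D), ((D.factorial : ℝ))⁻¹ * 1 :=
        Finset.sum_le_sum fun π _ => mul_le_mul_of_nonneg_left (h1 _ _) hwpos.le
      _ = 1 := by
        rw [Finset.sum_const, nsmul_eq_mul]
        simp only [Finset.card_univ, mul_one]
        rw [hcard]
        field_simp
  · intro u
    unfold symmQ
    rw [Finset.sum_comm]
    have hinner : ∀ π : Equiv.Perm (Fin D),
        ∑ k : Fin D, ((D.factorial : ℝ))⁻¹ * r (u ∘ π) (π⁻¹ k)
          = ((D.factorial : ℝ))⁻¹ := by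
      intro π
      rw [← Finset.mul_sum]
      have : ∑ k : Fin D, r (u ∘ π) (π⁻¹ k) = ∑ k : Fin D, r (u ∘ π) k :=
        Equiv.sum_comp (π⁻¹ : Equiv.Perm (Fin D)) (r (u ∘ π))
      rw [this, hsum, mul_one]
    rw [Finset.sum_congr rfl fun π _ => hinner π, Finset.sum_const, nsmul_eq_mul]
    simp only [Finset.card_univ]
    rw [hcard]
    field_simp

lemma symmQ_consistent (r : (Fin D → unitInterval) → Fin D → ℝ) :
    IsConsistent (symmQ r) := by
  constructor
  · intro u k
    unfold symmQ
    rw [← Equiv.sum_comp (Equiv.mulLeft (Equiv.addLeft k : Equiv.Perm (Fin D)))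
      (fun ρ : Equiv.Perm (Fin D) => ((D.factorial : ℝ))⁻¹ * r (u ∘ ρ) (ρ⁻¹ k))]
    refine Finset.sum_congr rfl fun π _ => ?_
    simp only [Equiv.coe_mulLeft]
    have h1 : u ∘ ⇑(Equiv.addLeft k * π) = (fun i => u (k + i)) ∘ ⇑π := by
      funext i; simp [Equiv.Perm.mul_apply]
    have h2 : (Equiv.addLeft k * π)⁻¹ k = π⁻¹ 0 := by
      simp [mul_inv_rev, Equiv.Perm.mul_apply]
    rw [h1, h2]
  · intro u ι hι
    unfold symmQ
    rw [← Equiv.sum_comp (Equiv.mulLeft ι)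
      (fun ρ : Equiv.Perm (Fin D) => ((D.factorial : ℝ))⁻¹ * r (u ∘ ρ) (ρ⁻¹ 0))]
    refine Finset.sum_congr rfl fun π _ => ?_
    simp only [Equiv.coe_mulLeft]
    have h0' : ι⁻¹ 0 = 0 := by
      have hh := congrArg (fun x => ι⁻¹ x) hι
      simpa using hh.symm
    have h1 : u ∘ ⇑(ι * π) = (fun i => u (ι i)) ∘ ⇑π := by
      funext i; simp [Equiv.Perm.mul_apply]
    have h2 : (ι * π)⁻¹ 0 = π⁻¹ 0 := by
      simp [mul_inv_rev, Equiv.Perm.mul_apply, h0']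
    rw [h1, h2]

lemma symmQ_law (r : (Fin D → unitInterval) → Fin D → ℝ) (hr : Measurable r)
    (h0 : ∀ u k, 0 ≤ r u k) : sigmaVec (symmQ r) = sigmaVec r := by
  have key := sigmaVec_weighted (ι := Equiv.Perm (Fin D))
    (fun _ => ((D.factorial : ℝ))⁻¹) (fun _ => by positivity)
    (fun π u k => r (u ∘ π) (π⁻¹ k))
    (fun π => measurable_pi_lambda _ fun k =>
      (measurable_pi_apply (π⁻¹ k)).comp (hr.comp (meas_comp_perm π)))
    (fun π u k => h0 _ _)
  have : symmQ r = fun u k => ∑ π : Equiv.Perm (Fin D),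
      ((D.factorial : ℝ))⁻¹ * r (u ∘ π) (π⁻¹ k) := rfl
  rw [this, key]
  have hperm : ∀ π : Equiv.Perm (Fin D),
      sigmaVec (fun u k => r (u ∘ π) (π⁻¹ k)) = sigmaVec r := fun π => sigmaVec_perm r hr π
  rw [Finset.sum_congr rfl fun π _ => by rw [hperm π]]
  rw [Finset.sum_const, Finset.card_univ]
  rw [← Nat.cast_smul_eq_nsmul ℝ≥0∞, smul_smul]
  have hfac : ((Fintype.card (Equiv.Perm (Fin D)) : ℝ≥0∞))
      * ENNReal.ofReal ((D.factorial : ℝ))⁻¹ = 1 := by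
    have h1 : ENNReal.ofReal ((D.factorial : ℝ))⁻¹ = ((D.factorial : ℝ≥0∞))⁻¹ := by
      rw [ENNReal.ofReal_inv_of_pos (by positivity), ENNReal.ofReal_natCast]
    rw [h1, Fintype.card_perm, Fintype.card_fin]
    exact ENNReal.mul_inv_cancel (Nat.cast_ne_zero.2 D.factorial_pos.ne')
      (ENNReal.natCast_ne_top _)
  rw [hfac, one_smul]

end symmetrize

section directions
variable {D : ℕ} [NeZero D]

lemma backward_dir (p : (Fin D → unitInterval) → Fin D → ℝ) (hp : IsStrategyVec p)
    (hdet : ∀ q : (Fin D → unitInterval) → Fin D → ℝ, IsStrategyVec q → IsConsistent q →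
        sigmaVec q = sigmaVec p →
        ∀ᵐ u ∂(LamD D), ∀ k, q u k = 0 ∨ q u k = 1) :
    IsExtremeLaw D (sigmaVec p) := by
  refine ⟨⟨p, hp, rfl⟩, ?_⟩
  rintro m₁ ⟨p₁, hp₁, rfl⟩ m₂ ⟨p₂, hp₂, rfl⟩ t ht0 ht1 heq
  set r : (Fin D → unitInterval) → Fin D → ℝ :=
    fun u k => t * p₁ u k + (1 - t) * p₂ u k with hrdef
  have ht1' : (0:ℝ) ≤ 1 - t := by linarith
  have hrs : IsStrategyVec r := by
    refine ⟨?_, ?_, ?_, ?_⟩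
    · refine measurable_pi_lambda _ fun k => ?_
      exact ((meas_app hp₁.1 k).const_mul t).add ((meas_app hp₂.1 k).const_mul (1-t))
    · intro u k
      exact add_nonneg (mul_nonneg ht0.le (hp₁.2.1 u k)) (mul_nonneg ht1' (hp₂.2.1 u k))
    · intro u k
      show t * p₁ u k + (1 - t) * p₂ u k ≤ 1
      nlinarith [mul_le_mul_of_nonneg_left (hp₁.2.2.1 u k) ht0.le,
        mul_le_mul_of_nonneg_left (hp₂.2.2.1 u k) ht1']
    · intro u
      simp only [hrdef]
      rw [Finset.sum_add_distrib, ← Finset.mul_sum, ← Finset.mul_sum,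
        hp₁.2.2.2 u, hp₂.2.2.2 u]
      ring
  -- law of r is sigmaVec p
  have hrlaw : sigmaVec r = sigmaVec p := by
    have hc := sigmaVec_convex p₁ p₂ hp₁.1 hp₂.1 hp₁.2.1 hp₂.2.1 t ht0.le ht1.le
    rw [hrdef, hc, ← heq]
  -- symmetrize r
  have hQ := symmQ_strategy hrs
  have hQlaw : sigmaVec (symmQ r) = sigmaVec p := by
    rw [symmQ_law r hrs.1 hrs.2.1, hrlaw]
  have hdetQ := hdet (symmQ r) hQ (symmQ_consistent r) hQlaw
  -- deduce p₁ = p₂ a.e.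
  have hae : ∀ᵐ u ∂(LamD D), ∀ k, p₁ u k = p₂ u k := by
    filter_upwards [hdetQ] with u hu
    intro k
    have hwpos : (0:ℝ) < ((D.factorial : ℝ))⁻¹ := by positivity
    have hterm_nonneg : ∀ π : Equiv.Perm (Fin D),
        0 ≤ ((D.factorial : ℝ))⁻¹ * r (u ∘ π) (π⁻¹ k) :=
      fun π => mul_nonneg hwpos.le (hrs.2.1 _ _)
    have hid : (u ∘ ⇑(1 : Equiv.Perm (Fin D))) = u := by
      funext i; simp
    have hrk : r u k = 0 ∨ r u k = 1 := by
      rcases hu k with h | h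
      · -- sum is zero, all terms zero
        left
        have h' : ∑ π : Equiv.Perm (Fin D),
            ((D.factorial : ℝ))⁻¹ * r (u ∘ π) (π⁻¹ k) = 0 := h
        have hz := (Finset.sum_eq_zero_iff_of_nonneg
          (fun π _ => hterm_nonneg π)).1 h' (1 : Equiv.Perm (Fin D)) (Finset.mem_univ _)
        have h2 : ((D.factorial : ℝ))⁻¹ * r u k = 0 := by
          simpa [hid, inv_one, Equiv.Perm.coe_one, Function.comp_id] using hz
        rcases mul_eq_zero.1 h2 with h3 | h3
        · exact absurd h3 hwpos.ne'
        · exact h3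
      · -- sum is one, all terms maximal
        right
        have h' : ∑ π : Equiv.Perm (Fin D),
            ((D.factorial : ℝ))⁻¹ * r (u ∘ π) (π⁻¹ k) = 1 := h
        have hsumw : ∑ _π : Equiv.Perm (Fin D), ((D.factorial : ℝ))⁻¹ = 1 := by
          rw [Finset.sum_const, nsmul_eq_mul, Finset.card_univ, Fintype.card_perm, Fintype.card_fin]
          field_simp
        have hdiff : ∑ π : Equiv.Perm (Fin D),
            (((D.factorial : ℝ))⁻¹ - ((D.factorial : ℝ))⁻¹ * r (u ∘ π) (π⁻¹ k)) = 0 := by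
          rw [Finset.sum_sub_distrib, hsumw, h']
          ring
        have hz := (Finset.sum_eq_zero_iff_of_nonneg
          (fun π _ => by
            have hle := hrs.2.2.1 (u ∘ π) (π⁻¹ k)
            nlinarith [hterm_nonneg π, hwpos])).1 hdiff
            (1 : Equiv.Perm (Fin D)) (Finset.mem_univ _)
        have hz' : ((D.factorial : ℝ))⁻¹ - ((D.factorial : ℝ))⁻¹ * r u k = 0 := by
          simpa [hid, inv_one, Equiv.Perm.coe_one, Function.comp_id] using hz
        have h3 : ((D.factorial : ℝ))⁻¹ * r u k = ((D.factorial : ℝ))⁻¹ * 1 := by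
          linarith
        exact mul_left_cancel₀ hwpos.ne' h3
    -- from r u k ∈ {0,1} deduce p₁ u k = p₂ u k
    have h1a := hp₁.2.1 u k
    have h1b := hp₂.2.1 u k
    have h2a := hp₁.2.2.1 u k
    have h2b := hp₂.2.2.1 u k
    have hru : r u k = t * p₁ u k + (1 - t) * p₂ u k := rfl
    rcases hrk with h | h
    · rw [hru] at h
      have e1 : p₁ u k = 0 := by
        by_contra hne
        have hpos : 0 < p₁ u k := lt_of_le_of_ne h1a (Ne.symm hne)
        nlinarith [mul_nonneg (by linarith : (0:ℝ) ≤ 1 - t) h1b, mul_pos ht0 hpos]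
      have e2 : p₂ u k = 0 := by
        by_contra hne
        have hpos : 0 < p₂ u k := lt_of_le_of_ne h1b (Ne.symm hne)
        nlinarith [mul_nonneg ht0.le h1a, mul_pos (by linarith : (0:ℝ) < 1 - t) hpos]
      rw [e1, e2]
    · rw [hru] at h
      have e1 : p₁ u k = 1 := by
        by_contra hne
        have hlt : p₁ u k < 1 := lt_of_le_of_ne h2a hne
        nlinarith [mul_lt_mul_of_pos_left hlt ht0,
          mul_le_mul_of_nonneg_left h2b (by linarith : (0:ℝ) ≤ 1 - t)]
      have e2 : p₂ u k = 1 := by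
        have h3 : (1 - t) * p₂ u k = (1 - t) * 1 := by rw [e1] at h; linarith
        exact mul_left_cancel₀ (by linarith : (1:ℝ) - t > 0).ne' h3
      rw [e1, e2]
  rw [sigmaVec_congr_ae hae]

/-- Perturbation construction: a non-deterministic strategy splits into two laws. -/
lemma perturb_laws (q : (Fin D → unitInterval) → Fin D → ℝ) (hq : IsStrategyVec q)
    (jj kk : Fin D) (hne : jj ≠ kk) (δ : ℝ) (hδ0 : 0 < δ)
    (E'' : Set (Fin D → unitInterval)) (hE : MeasurableSet E'') (hEpos : LamD D E'' ≠ 0)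
    (hsub : ∀ u ∈ E'', δ ≤ q u jj ∧ q u jj ≤ 1 - δ ∧ δ ≤ q u kk ∧ q u kk ≤ 1 - δ)
    (A : Set unitInterval) (hA : MeasurableSet A)
    (hin : ∀ u ∈ E'', u jj ∈ A) (hout : ∀ u ∈ E'', u kk ∉ A) :
    ∃ q₁ q₂ : (Fin D → unitInterval) → Fin D → ℝ, IsStrategyVec q₁ ∧ IsStrategyVec q₂ ∧
      sigmaVec q = ENNReal.ofReal (1/2) • sigmaVec q₁
        + ENNReal.ofReal (1 - 1/2) • sigmaVec q₂ ∧
      sigmaVec q₁ ≠ sigmaVec q₂ := by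
  classical
  obtain ⟨hqm, hq0, hq1, hqsum⟩ := hq
  set c : Fin D → ℝ := fun l => if l = jj then δ else if l = kk then -δ else 0 with hc
  set ind : (Fin D → unitInterval) → ℝ := fun u => E''.indicator (fun _ => (1:ℝ)) u with hinddef
  have hind_mem : ∀ u ∈ E'', ind u = 1 := fun u hu => Set.indicator_of_mem hu _
  have hind_nmem : ∀ u ∉ E'', ind u = 0 := fun u hu => Set.indicator_of_notMem hu _
  have hindm : Measurable ind := measurable_const.indicator hE
  set q₁ : (Fin D → unitInterval) → Fin D → ℝ := fun u l => q u l + c l * ind u with hq₁def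
  set q₂ : (Fin D → unitInterval) → Fin D → ℝ := fun u l => q u l - c l * ind u with hq₂def
  have hcsum : ∑ l : Fin D, c l = 0 := by
    have hsplit : ∀ l : Fin D, c l = (if l = jj then δ else 0) + (if l = kk then -δ else 0) := by
      intro l
      rcases eq_or_ne l jj with rfl | h1
      · simp [hc, hne]
      · rcases eq_or_ne l kk with rfl | h2
        · simp [hc, h1]
        · simp [hc, h1, h2]
    rw [Finset.sum_congr rfl fun l _ => hsplit l, Finset.sum_add_distrib]
    rw [Finset.sum_ite_eq' Finset.univ jj (fun _ => δ),
      Finset.sum_ite_eq' Finset.univ kk (fun _ => -δ)]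
    simp
  -- both perturbations are strategies
  have hbounds : ∀ (s : ℝ), s = 1 ∨ s = -1 →
      IsStrategyVec (fun u l => q u l + s * (c l * ind u)) := by
    intro s hs
    refine ⟨?_, ?_, ?_, ?_⟩
    · refine measurable_pi_lambda _ fun l => ?_
      exact (meas_app hqm l).add ((hindm.const_mul (c l)).const_mul s)
    · intro u l
      show 0 ≤ q u l + s * (c l * ind u)
      by_cases hu : u ∈ E''
      · rw [hind_mem u hu]
        obtain ⟨hA1, hA2, hA3, hA4⟩ := hsub u hu
        rcases eq_or_ne l jj with rfl | h1
        · simp only [hc, eq_self_iff_true, if_true]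
          rcases hs with rfl | rfl <;> nlinarith
        · rcases eq_or_ne l kk with rfl | h2
          · simp only [hc, if_neg h1, eq_self_iff_true, if_true]
            rcases hs with rfl | rfl <;> nlinarith
          · simp only [hc, if_neg h1, if_neg h2]
            simpa using hq0 u l
      · rw [hind_nmem u hu]
        simpa using hq0 u l
    · intro u l
      show q u l + s * (c l * ind u) ≤ 1
      by_cases hu : u ∈ E''
      · rw [hind_mem u hu]
        obtain ⟨hA1, hA2, hA3, hA4⟩ := hsub u hu
        have := hq1 u l
        rcases eq_or_ne l jj with rfl | h1
        · simp only [hc, eq_self_iff_true, if_true]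
          rcases hs with rfl | rfl <;> nlinarith
        · rcases eq_or_ne l kk with rfl | h2
          · simp only [hc, if_neg h1, eq_self_iff_true, if_true]
            rcases hs with rfl | rfl <;> nlinarith
          · simp only [hc, if_neg h1, if_neg h2]
            simpa using hq1 u l
      · rw [hind_nmem u hu]
        simpa using hq1 u l
    · intro u
      have : ∑ l : Fin D, (q u l + s * (c l * ind u))
          = ∑ l : Fin D, q u l + s * ind u * ∑ l : Fin D, c l := by
        rw [Finset.sum_add_distrib, Finset.mul_sum]
        congr 1
        refine Finset.sum_congr rfl fun l _ => ?_
        ring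
      rw [this, hcsum, hqsum u]
      ring
  have hs₁ : IsStrategyVec q₁ := by
    have := hbounds 1 (Or.inl rfl)
    simpa [hq₁def] using this
  have hs₂ : IsStrategyVec q₂ := by
    have := hbounds (-1) (Or.inr rfl)
    have hrw : (fun (u : Fin D → unitInterval) (l : Fin D) => q u l + (-1) * (c l * ind u)) = q₂ := by
      funext u l
      simp [hq₂def]
      ring
    rwa [hrw] at this
  refine ⟨q₁, q₂, hs₁, hs₂, ?_, ?_⟩
  · -- convex combination
    have hcomb := sigmaVec_convex q₁ q₂ hs₁.1 hs₂.1 hs₁.2.1 hs₂.2.1 (1/2)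
      (by norm_num) (by norm_num)
    have hqrw : (fun (u : Fin D → unitInterval) (k : Fin D) =>
        (1/2 : ℝ) * q₁ u k + (1 - 1/2) * q₂ u k) = q := by
      funext u l
      simp only [hq₁def, hq₂def]
      ring
    rw [hqrw] at hcomb
    exact hcomb
  · -- the two laws differ on A
    set d : ℝ≥0∞ := ENNReal.ofReal δ * LamD D E'' with hd
    have hdne : d ≠ 0 := mul_ne_zero (ENNReal.ofReal_pos.2 hδ0).ne' hEpos
    set T : ((Fin D → unitInterval) → Fin D → ℝ) → Fin D → ℝ≥0∞ := fun f l =>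
      ∫⁻ u, A.indicator (fun _ => (1:ℝ≥0∞)) (u l) * ENNReal.ofReal (f u l) ∂(LamD D) with hT
    have happly : ∀ f, Measurable f → sigmaVec f A = ∑ l : Fin D, T f l :=
      fun f hf => sigmaVec_apply f hf hA
    have hTl : ∀ (f : (Fin D → unitInterval) → Fin D → ℝ), (f = q₁ ∨ f = q₂) →
        ∀ l, l ≠ jj → T f l = T q l := by
      rintro f hf l hl
      simp only [hT]
      refine lintegral_congr fun u => ?_
      by_cases hu : u ∈ E''
      · rcases eq_or_ne l kk with rfl | h2
        · rw [Set.indicator_of_notMem (hout u hu)]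
          simp
        · have hcl : c l = 0 := by simp [hc, hl, h2]
          have hfq : f u l = q u l := by
            rcases hf with rfl | rfl <;> simp [hq₁def, hq₂def, hcl]
          rw [hfq]
      · have hfq : f u l = q u l := by
          rcases hf with rfl | rfl <;> simp [hq₁def, hq₂def, hind_nmem u hu]
        rw [hfq]
    have hTjj1 : T q₁ jj = T q jj + d := by
      have hpt : ∀ u, A.indicator (fun _ => (1:ℝ≥0∞)) (u jj) * ENNReal.ofReal (q₁ u jj)
          = A.indicator (fun _ => (1:ℝ≥0∞)) (u jj) * ENNReal.ofReal (q u jj)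
            + E''.indicator (fun _ => ENNReal.ofReal δ) u := by
        intro u
        by_cases hu : u ∈ E''
        · have h1 : q₁ u jj = q u jj + δ := by
            simp [hq₁def, hc, hind_mem u hu]
          rw [h1, Set.indicator_of_mem (hin u hu), Set.indicator_of_mem hu, one_mul, one_mul,
            ENNReal.ofReal_add (hq0 u jj) hδ0.le]
        · have h1 : q₁ u jj = q u jj := by
            simp [hq₁def, hind_nmem u hu]
          rw [h1, Set.indicator_of_notMem hu, add_zero]
      simp only [hT]
      rw [lintegral_congr hpt, lintegral_add_right _ (measurable_const.indicator hE),
        lintegral_indicator_const hE]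
    have hTjj2 : T q₂ jj + d = T q jj := by
      have hpt : ∀ u, A.indicator (fun _ => (1:ℝ≥0∞)) (u jj) * ENNReal.ofReal (q₂ u jj)
            + E''.indicator (fun _ => ENNReal.ofReal δ) u
          = A.indicator (fun _ => (1:ℝ≥0∞)) (u jj) * ENNReal.ofReal (q u jj) := by
        intro u
        by_cases hu : u ∈ E''
        · have h1 : q₂ u jj = q u jj - δ := by
            simp [hq₂def, hc, hind_mem u hu]
          rw [h1, Set.indicator_of_mem (hin u hu), Set.indicator_of_mem hu, one_mul, one_mul,
            ← ENNReal.ofReal_add (by linarith [(hsub u hu).1] : (0:ℝ) ≤ q u jj - δ) hδ0.le,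
            sub_add_cancel]
        · have h1 : q₂ u jj = q u jj := by
            simp [hq₂def, hind_nmem u hu]
          rw [h1, Set.indicator_of_notMem hu, add_zero]
      simp only [hT]
      have hdint : d = ∫⁻ u, E''.indicator (fun _ => ENNReal.ofReal δ) u ∂(LamD D) := by
        rw [lintegral_indicator_const hE, hd]
      rw [hdint, ← lintegral_add_right _ (measurable_const.indicator hE), lintegral_congr hpt]
    have hsum1 : sigmaVec q₁ A = sigmaVec q A + d := by
      rw [happly q₁ hs₁.1, happly q hqm,
        ← Finset.add_sum_erase _ (T q₁) (Finset.mem_univ jj),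
        ← Finset.add_sum_erase _ (T q) (Finset.mem_univ jj), hTjj1,
        Finset.sum_congr rfl (fun l hl => hTl q₁ (Or.inl rfl) l (Finset.ne_of_mem_erase hl))]
      exact add_right_comm _ _ _
    have hsum2 : sigmaVec q₂ A + d = sigmaVec q A := by
      rw [happly q₂ hs₂.1, happly q hqm,
        ← Finset.add_sum_erase _ (T q₂) (Finset.mem_univ jj),
        ← Finset.add_sum_erase _ (T q) (Finset.mem_univ jj),
        Finset.sum_congr rfl (fun l hl => hTl q₂ (Or.inr rfl) l (Finset.ne_of_mem_erase hl)),
        add_right_comm, hTjj2]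
    intro hcontra
    have h1 : sigmaVec q A + d = sigmaVec q₂ A := by rw [← hsum1, hcontra]
    have h2 : sigmaVec q A + (d + d) = sigmaVec q A := by
      rw [← add_assoc, h1, hsum2]
    have hfin := sigmaVec_ne_top q hqm hq1 A
    have hdd : d + d = 0 :=
      (ENNReal.add_right_inj hfin).1 (h2.trans (add_zero _).symm)
    have hd0 : d = 0 := le_antisymm (le_self_add.trans hdd.le) zero_le
    exact hdne hd0
lemma exists_frac_pair (q : (Fin D → unitInterval) → Fin D → ℝ) (hq : IsStrategyVec q)
    (hae : ¬ ∀ᵐ u ∂(LamD D), ∀ k, q u k = 0 ∨ q u k = 1) :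
    ∃ (j k : Fin D) (n : ℕ), j ≠ k ∧
      LamD D {u | (((n:ℝ)+1)⁻¹ ≤ q u j ∧ q u j ≤ 1 - ((n:ℝ)+1)⁻¹)
        ∧ (((n:ℝ)+1)⁻¹ ≤ q u k ∧ q u k ≤ 1 - ((n:ℝ)+1)⁻¹)} ≠ 0 := by
  classical
  set Sset : Fin D → Fin D → ℕ → Set (Fin D → unitInterval) := fun j k n =>
    {u | (((n:ℝ)+1)⁻¹ ≤ q u j ∧ q u j ≤ 1 - ((n:ℝ)+1)⁻¹)
      ∧ (((n:ℝ)+1)⁻¹ ≤ q u k ∧ q u k ≤ 1 - ((n:ℝ)+1)⁻¹)} with hSdef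
  set Eset : Fin D → Fin D → ℕ → Set (Fin D → unitInterval) := fun j k n =>
    {u | j ≠ k ∧ u ∈ Sset j k n} with hEdef
  have hNne : LamD D {u | ¬ ∀ k, q u k = 0 ∨ q u k = 1} ≠ 0 :=
    fun h0 => hae (ae_iff.2 h0)
  have hcov : {u | ¬ ∀ k, q u k = 0 ∨ q u k = 1} ⊆ ⋃ j, ⋃ k, ⋃ n, Eset j k n := by
    intro u hu
    simp only [Set.mem_setOf_eq] at hu
    push_neg at hu
    obtain ⟨j, hj⟩ := hu
    have hj0 : 0 < q u j := lt_of_le_of_ne (hq.2.1 u j) (Ne.symm hj.1)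
    have hj1 : q u j < 1 := lt_of_le_of_ne (hq.2.2.1 u j) hj.2
    have hk : ∃ k, k ≠ j ∧ 0 < q u k ∧ q u k < 1 := by
      by_contra hcon
      push_neg at hcon
      have hval : ∀ k ∈ Finset.univ.erase j, q u k = if q u k = 1 then (1:ℝ) else 0 := by
        intro k hkmem
        have hkj : k ≠ j := (Finset.mem_erase.1 hkmem).1
        rcases lt_or_eq_of_le (hq.2.1 u k) with hpos | hzero
        · have h1 : 1 ≤ q u k := hcon k hkj hpos
          have h2 : q u k = 1 := le_antisymm (hq.2.2.1 u k) h1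
          simp [h2]
        · simp [← hzero]
      have hsum := hq.2.2.2 u
      rw [← Finset.add_sum_erase Finset.univ (q u) (Finset.mem_univ j),
        Finset.sum_congr rfl hval, Finset.sum_boole] at hsum
      set m := ((Finset.univ.erase j).filter (fun k => q u k = 1)).card with hm
      have hmlt : (m:ℝ) < 1 := by linarith
      have hm0 : m = 0 := Nat.lt_one_iff.1 (by exact_mod_cast hmlt)
      rw [hm0] at hsum
      simp at hsum
      linarith
    obtain ⟨k, hkj, hk0, hk1⟩ := hk
    set ε : ℝ := min (min (q u j) (1 - q u j)) (min (q u k) (1 - q u k)) with hε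
    have hεpos : 0 < ε :=
      lt_min (lt_min hj0 (by linarith)) (lt_min hk0 (by linarith))
    obtain ⟨n, hn⟩ := exists_nat_one_div_lt hεpos
    have hδε : ((n:ℝ)+1)⁻¹ < ε := by rwa [one_div] at hn
    have he1 : ε ≤ q u j := le_trans (min_le_left _ _) (min_le_left _ _)
    have he2 : ε ≤ 1 - q u j := le_trans (min_le_left _ _) (min_le_right _ _)
    have he3 : ε ≤ q u k := le_trans (min_le_right _ _) (min_le_left _ _)
    have he4 : ε ≤ 1 - q u k := le_trans (min_le_right _ _) (min_le_right _ _)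
    refine Set.mem_iUnion.2 ⟨j, Set.mem_iUnion.2 ⟨k, Set.mem_iUnion.2 ⟨n, ?_⟩⟩⟩
    exact ⟨Ne.symm hkj, ⟨by linarith, by linarith⟩, ⟨by linarith, by linarith⟩⟩
  by_contra hcon
  push_neg at hcon
  have hnull : ∀ (j k : Fin D) (n : ℕ), LamD D (Eset j k n) = 0 := by
    intro j k n
    rcases eq_or_ne j k with rfl | hjk
    · have : Eset j j n = ∅ := by
        ext u; simp [hEdef]
      rw [this]; simp
    · have heq : Eset j k n = Sset j k n := by
        ext u; simp [hEdef, hjk]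
      rw [heq]
      exact hcon j k n hjk
  exact hNne (measure_mono_null hcov
    (measure_iUnion_null fun j => measure_iUnion_null fun k =>
      measure_iUnion_null fun n => hnull j k n))

lemma forward_dir (p : (Fin D → unitInterval) → Fin D → ℝ) (hp : IsStrategyVec p)
    (hext : IsExtremeLaw D (sigmaVec p))
    (q : (Fin D → unitInterval) → Fin D → ℝ) (hq : IsStrategyVec q)
    (hlaw : sigmaVec q = sigmaVec p) :
    ∀ᵐ u ∂(LamD D), ∀ k, q u k = 0 ∨ q u k = 1 := by
  by_contra hae
  obtain ⟨j, k, n, hjk, hEpos⟩ := exists_frac_pair q hq hae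
  set δ : ℝ := ((n:ℝ)+1)⁻¹ with hδ
  have hδ0 : 0 < δ := by positivity
  set E : Set (Fin D → unitInterval) :=
    {u | (δ ≤ q u j ∧ q u j ≤ 1 - δ) ∧ (δ ≤ q u k ∧ q u k ≤ 1 - δ)} with hEdef
  have hEmeas : MeasurableSet E := by
    have m1 : MeasurableSet {u : Fin D → unitInterval | δ ≤ q u j} :=
      measurableSet_le measurable_const (meas_app hq.1 j)
    have m2 : MeasurableSet {u : Fin D → unitInterval | q u j ≤ 1 - δ} :=
      measurableSet_le (meas_app hq.1 j) measurable_const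
    have m3 : MeasurableSet {u : Fin D → unitInterval | δ ≤ q u k} :=
      measurableSet_le measurable_const (meas_app hq.1 k)
    have m4 : MeasurableSet {u : Fin D → unitInterval | q u k ≤ 1 - δ} :=
      measurableSet_le (meas_app hq.1 k) measurable_const
    exact (m1.inter m2).inter (m3.inter m4)
  have hdiag := LamD_diag_null (D := D) hjk
  set F : ℚ → Set (Fin D → unitInterval) := fun cq =>
    E ∩ {u | ((u j : ℝ) < cq ∧ (cq:ℝ) < (u k : ℝ))} with hFdef
  set G : ℚ → Set (Fin D → unitInterval) := fun cq =>
    E ∩ {u | ((u k : ℝ) < cq ∧ (cq:ℝ) < (u j : ℝ))} with hGdef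
  have hmeasj : Measurable fun u : Fin D → unitInterval => (u j : ℝ) :=
    measurable_subtype_coe.comp (measurable_pi_apply j)
  have hmeask : Measurable fun u : Fin D → unitInterval => (u k : ℝ) :=
    measurable_subtype_coe.comp (measurable_pi_apply k)
  have hFmeas : ∀ cq : ℚ, MeasurableSet (F cq) := by
    intro cq
    exact hEmeas.inter ((measurableSet_lt hmeasj measurable_const).inter
      (measurableSet_lt measurable_const hmeask))
  have hGmeas : ∀ cq : ℚ, MeasurableSet (G cq) := by
    intro cq
    exact hEmeas.inter ((measurableSet_lt hmeask measurable_const).inter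
      (measurableSet_lt measurable_const hmeasj))
  have hcover : E ⊆ {u : Fin D → unitInterval | u j = u k}
      ∪ ((⋃ cq : ℚ, F cq) ∪ (⋃ cq : ℚ, G cq)) := by
    intro u hu
    rcases lt_trichotomy ((u j : ℝ)) ((u k : ℝ)) with hlt | hmid | hgt
    · obtain ⟨cq, h1, h2⟩ := exists_rat_btwn hlt
      exact Or.inr (Or.inl (Set.mem_iUnion.2 ⟨cq, hu, h1, h2⟩))
    · exact Or.inl (Subtype.ext hmid)
    · obtain ⟨cq, h1, h2⟩ := exists_rat_btwn hgt
      exact Or.inr (Or.inr (Set.mem_iUnion.2 ⟨cq, hu, h1, h2⟩))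
  have hex : ∃ cq : ℚ, LamD D (F cq) ≠ 0 ∨ LamD D (G cq) ≠ 0 := by
    by_contra hcon
    push_neg at hcon
    have hFnull : LamD D (⋃ cq : ℚ, F cq) = 0 :=
      measure_iUnion_null fun cq => (hcon cq).1
    have hGnull : LamD D (⋃ cq : ℚ, G cq) = 0 :=
      measure_iUnion_null fun cq => (hcon cq).2
    have hallnull : LamD D ({u : Fin D → unitInterval | u j = u k}
        ∪ ((⋃ cq : ℚ, F cq) ∪ (⋃ cq : ℚ, G cq))) = 0 :=
      measure_union_null hdiag (measure_union_null hFnull hGnull)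
    exact hEpos (measure_mono_null hcover hallnull)
  obtain ⟨cq, hcq⟩ := hex
  have hfinal : ∃ q₁ q₂ : (Fin D → unitInterval) → Fin D → ℝ,
      IsStrategyVec q₁ ∧ IsStrategyVec q₂ ∧
      sigmaVec q = ENNReal.ofReal (1/2) • sigmaVec q₁
        + ENNReal.ofReal (1 - 1/2) • sigmaVec q₂ ∧
      sigmaVec q₁ ≠ sigmaVec q₂ := by
    rcases hcq with hpos | hpos
    · set A : Set unitInterval := {y | (y:ℝ) < (cq:ℝ)} with hAdef
      have hAmeas : MeasurableSet A :=
        measurableSet_lt measurable_subtype_coe measurable_const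
      refine perturb_laws q hq j k hjk δ hδ0 (F cq) (hFmeas cq) hpos ?_ A hAmeas ?_ ?_
      · intro u hu
        exact ⟨hu.1.1.1, hu.1.1.2, hu.1.2.1, hu.1.2.2⟩
      · intro u hu
        exact hu.2.1
      · intro u hu hmem
        exact absurd hmem (not_lt.2 (le_of_lt hu.2.2))
    · set A : Set unitInterval := {y | (y:ℝ) < (cq:ℝ)} with hAdef
      have hAmeas : MeasurableSet A :=
        measurableSet_lt measurable_subtype_coe measurable_const
      refine perturb_laws q hq k j (Ne.symm hjk) δ hδ0 (G cq) (hGmeas cq) hpos ?_ A hAmeas ?_ ?_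
      · intro u hu
        exact ⟨hu.1.2.1, hu.1.2.2, hu.1.1.1, hu.1.1.2⟩
      · intro u hu
        exact hu.2.1
      · intro u hu hmem
        exact absurd hmem (not_lt.2 (le_of_lt hu.2.2))
  obtain ⟨q₁, q₂, hs₁, hs₂, hcomb, hneq⟩ := hfinal
  refine hneq (hext.2 (sigmaVec q₁) ⟨q₁, hs₁, rfl⟩ (sigmaVec q₂) ⟨q₂, hs₂, rfl⟩
    (1/2) (by norm_num) (by norm_num) ?_)
  rw [← hlaw]
  exact hcomb

end directions

/-- `σ_p` is an extreme point iff every consistent single-edge strategy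
achieving it is deterministic. -/
theorem stmt7 (D : ℕ) [NeZero D] (hD : 2 ≤ D)
    (p : (Fin D → unitInterval) → Fin D → ℝ) (hp : IsStrategyVec p) :
    IsExtremeLaw D (sigmaVec p) ↔
      ∀ q : (Fin D → unitInterval) → Fin D → ℝ, IsStrategyVec q → IsConsistent q →
        sigmaVec q = sigmaVec p →
        ∀ᵐ u ∂(LamD D), ∀ k, q u k = 0 ∨ q u k = 1 := by
  constructor
  · intro hext q hq _hqc hlaw
    exact forward_dir p hp hext q hq hlaw
  · intro hdet
    exact backward_dir p hp hdet
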